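/- For every real number t, the exponential generating function of the excedance Eulerian polynomials satisfies, as an identity of formal power series in x over ℝ: (C(t) − rescale(t−1)(exp)) · (∑_{n≥0} A_n(t) x^n / n!) = C(t − 1), where A_n(t) := ∑_{σ ∈ Perm(Fin n)} t^{exc(σ)}, exp is the exponential power series, rescale(c) substitutes x ↦ c·x, and C denotes a constant power series. Equivalently, ∑_{n≥0} A_n(t) x^n/n! = (t−1)/(t − e^{x(t−1)}). -/

import Mathlib

/-- The excedance number of a permutation: the number of indices `i` with `σ i > i`. -/
def exc {n : ℕ} (σ : Equiv.Perm (Fin n)) : ℕ :=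
  (Finset.univ.filter fun i : Fin n => i < σ i).card

/-- The excedance Eulerian polynomial evaluated at `t`:
`A n t = ∑_{σ ∈ 𝔖_n} t ^ exc σ`. -/
def eulerianValue (n : ℕ) (t : ℝ) : ℝ :=
  ∑ σ : Equiv.Perm (Fin n), t ^ exc σ

open Polynomial Finset Equiv

noncomputable def eulerPoly (n : ℕ) : Polynomial ℝ :=
  ∑ σ : Equiv.Perm (Fin n), X ^ exc σ

lemma eulerianValue_eq_eval (n : ℕ) (t : ℝ) :
    eulerianValue n t = (eulerPoly n).eval t := by
  simp [eulerPoly, eulerianValue, eval_finset_sum]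

lemma exc_le {n : ℕ} (σ : Equiv.Perm (Fin n)) : exc σ ≤ n := by
  simpa [exc] using Finset.card_filter_le Finset.univ (fun i : Fin n => i < σ i)

lemma card_inv_lt {n : ℕ} (σ : Equiv.Perm (Fin n)) :
    (Finset.univ.filter fun q : Fin n => σ⁻¹ q < q).card = exc σ := by
  rw [exc]
  apply Finset.card_bij (fun q _ => σ⁻¹ q)
  · intro q hq
    simp only [mem_filter, mem_univ, true_and] at hq ⊢
    simpa using hq
  · intro a ha b hb h
    exact σ⁻¹.injective h
  · intro i hi
    simp only [mem_filter, mem_univ, true_and] at hi ⊢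
    exact ⟨σ i, by simpa using hi, by simp⟩

lemma exc_zero {σ : Equiv.Perm (Fin 0)} : exc σ = 0 := by
  simp [exc]

lemma exc_decompose_zero {n : ℕ} (σ : Equiv.Perm (Fin n)) :
    exc (Equiv.Perm.decomposeFin.symm (0, σ)) = exc σ := by
  rw [exc, Finset.card_filter, Fin.sum_univ_succ, exc, Finset.card_filter]
  simp [Equiv.Perm.decomposeFin_symm_apply_zero, Equiv.Perm.decomposeFin_symm_apply_succ,
    Fin.succ_lt_succ_iff]

lemma exc_decompose_succ {n : ℕ} (σ : Equiv.Perm (Fin n)) (q : Fin n) :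
    exc (Equiv.Perm.decomposeFin.symm (q.succ, σ)) =
      if σ⁻¹ q < q then exc σ else exc σ + 1 := by
  rw [exc, Finset.card_filter, Fin.sum_univ_succ]
  have h0 : ((0 : Fin (n+1)) < Equiv.Perm.decomposeFin.symm (q.succ, σ) 0) := by
    simp [Equiv.Perm.decomposeFin_symm_apply_zero, Fin.succ_pos]
  rw [if_pos h0]
  have hterm : ∀ i : Fin n,
      (if (i.succ : Fin (n+1)) < Equiv.Perm.decomposeFin.symm (q.succ, σ) i.succ then 1 else 0) =
      (if σ i = q then 0 else if i < σ i then (1:ℕ) else 0) := by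
    intro i
    rw [Equiv.Perm.decomposeFin_symm_apply_succ]
    by_cases h : σ i = q
    · simp [h, Equiv.swap_apply_right]
    · rw [Equiv.swap_apply_of_ne_of_ne (Fin.succ_ne_zero _) (by simpa [Fin.succ_inj] using h)]
      simp [Fin.succ_lt_succ_iff, h]
  simp only [hterm]
  have hsplit : ∑ i : Fin n, (if σ i = q then 0 else if i < σ i then (1:ℕ) else 0)
      = ∑ i ∈ Finset.univ.erase (σ⁻¹ q), (if i < σ i then (1:ℕ) else 0) := by
    rw [← Finset.add_sum_erase _ _ (Finset.mem_univ (σ⁻¹ q))]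
    rw [if_pos (by simp)]
    rw [zero_add]
    apply Finset.sum_congr rfl
    intro i hi
    rw [if_neg]
    intro h
    exact (Finset.mem_erase.mp hi).1 (by simp [← h])
  rw [hsplit]
  have hexc : exc σ = (if σ⁻¹ q < σ (σ⁻¹ q) then 1 else 0) +
      ∑ i ∈ Finset.univ.erase (σ⁻¹ q), (if i < σ i then (1:ℕ) else 0) := by
    rw [exc, Finset.card_filter, ← Finset.add_sum_erase _ _ (Finset.mem_univ (σ⁻¹ q))]
  rw [hexc]
  simp only [show σ (σ⁻¹ q) = q by simp]
  by_cases h : σ⁻¹ q < q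
  · rw [if_pos h, if_pos h]
  · rw [if_neg h, if_neg h]
    ring

lemma perSigma (e n : ℕ) (he : e ≤ n) :
    X ^ e + (e : Polynomial ℝ) * X ^ e + ((n - e : ℕ) : Polynomial ℝ) * X ^ (e+1) =
      (1 + (n : Polynomial ℝ) * X) * X ^ e + X * (1 - X) * (C (e:ℝ) * X ^ (e-1)) := by
  rw [Nat.cast_sub he, Polynomial.C_eq_natCast]
  cases e with
  | zero => simp
  | succ m =>
    have h1 : (m + 1) - 1 = m := rfl
    rw [h1]
    push_cast
    have h2 : (X : Polynomial ℝ) ^ (m + 1) = X * X ^ m := by rw [pow_succ]; ring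
    rw [h2]
    ring

lemma eulerPoly_succ (n : ℕ) :
    eulerPoly (n+1) = (1 + (n : Polynomial ℝ) * X) * eulerPoly n
      + X * (1 - X) * derivative (eulerPoly n) := by
  have hdecomp : eulerPoly (n+1) =
      ∑ σ : Equiv.Perm (Fin n), ∑ p : Fin (n+1),
        X ^ exc (Equiv.Perm.decomposeFin.symm (p, σ)) := by
    rw [eulerPoly, ← Equiv.sum_comp Equiv.Perm.decomposeFin.symm
      (fun σ' => (X:Polynomial ℝ) ^ exc σ'), Fintype.sum_prod_type]
    exact Finset.sum_comm
  rw [hdecomp, eulerPoly, derivative_sum]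
  simp only [Finset.mul_sum, ← Finset.sum_add_distrib]
  apply Finset.sum_congr rfl
  intro σ _
  rw [Fin.sum_univ_succ, exc_decompose_zero]
  simp only [exc_decompose_succ]
  have hite : ∀ q : Fin n, (X:Polynomial ℝ) ^ (if σ⁻¹ q < q then exc σ else exc σ + 1)
      = if σ⁻¹ q < q then (X:Polynomial ℝ) ^ exc σ else X ^ (exc σ + 1) := by
    intro q; split <;> rfl
  simp only [hite]
  rw [Finset.sum_ite, Finset.sum_const, Finset.sum_const, card_inv_lt σ]
  have h2 : (Finset.univ.filter fun q => ¬ σ⁻¹ q < q).card = n - exc σ := by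
    have := Finset.card_filter_add_card_filter_not
      (s := (Finset.univ : Finset (Fin n))) (p := fun q => σ⁻¹ q < q)
    simp only [Finset.card_univ, Fintype.card_fin, card_inv_lt σ] at this
    omega
  rw [h2, nsmul_eq_mul, nsmul_eq_mul, derivative_X_pow]
  rw [← add_assoc]
  exact perSigma (exc σ) n (exc_le σ)

lemma eulerPoly_zero : eulerPoly 0 = 1 := by
  rw [eulerPoly]
  rw [Finset.sum_eq_single_of_mem (1 : Equiv.Perm (Fin 0)) (Finset.mem_univ _)]
  · simp [exc]
  · intro σ _ hσ
    exact absurd (Subsingleton.elim σ 1) hσ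

lemma eulerPoly_one : eulerPoly 1 = 1 := by
  rw [eulerPoly]
  rw [Finset.sum_eq_single_of_mem (1 : Equiv.Perm (Fin 1)) (Finset.mem_univ _)]
  · have : exc (1 : Equiv.Perm (Fin 1)) = 0 := by
      simp [exc, Finset.filter_eq_empty_iff]
    simp [this]
  · intro σ _ hσ
    exact absurd (Subsingleton.elim σ 1) hσ

lemma pow_peel (k : ℕ) :
    ((k : Polynomial ℝ)) * (X-1)^(k-1) * (X-1) = (k : Polynomial ℝ) * (X-1)^k := by
  cases k with
  | zero => simp
  | succ j => simp only [Nat.add_sub_cancel]; rw [pow_succ]; ring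

lemma key : ∀ n : ℕ, 1 ≤ n → X * eulerPoly n =
    ∑ k ∈ Finset.range (n+1),
      (n.choose k : Polynomial ℝ) * (X-1)^k * eulerPoly (n-k) := by
  intro n
  induction n with
  | zero => omega
  | succ m IH =>
    intro _
    rcases Nat.eq_zero_or_pos m with hm | hm
    · subst hm
      rw [Finset.sum_range_succ, Finset.sum_range_one]
      simp [eulerPoly_zero, eulerPoly_one]
    · have hIH := IH hm
      set Rm : Polynomial ℝ := ∑ k ∈ Finset.range (m+1),
        (m.choose k : Polynomial ℝ) * (X-1)^k * eulerPoly (m-k) with hRm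
      -- derivative of the IH
      have hder : X * derivative (eulerPoly m) = derivative Rm - eulerPoly m := by
        have h := congrArg derivative hIH
        rw [derivative_mul, derivative_X, one_mul] at h
        linear_combination h
      -- main algebraic step
      have step1 : X * eulerPoly (m+1) =
          ((m : Polynomial ℝ) + 1) * X * Rm - X * (X-1) * derivative Rm := by
        have h1 := eulerPoly_succ m
        linear_combination X * h1 + (X * (1-X)) * hder + (((m : Polynomial ℝ) + 1) * X) * hIH
      -- expand the derivative of Rm
      have hdR : derivative Rm = ∑ k ∈ Finset.range (m+1),
          ((m.choose k : Polynomial ℝ) * ((k : Polynomial ℝ) * (X-1)^(k-1)) * eulerPoly (m-k)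
            + (m.choose k : Polynomial ℝ) * (X-1)^k * derivative (eulerPoly (m-k))) := by
        rw [hRm, derivative_sum]
        apply Finset.sum_congr rfl
        intro k _
        simp only [derivative_mul, derivative_natCast, derivative_pow, derivative_sub,
          derivative_X, derivative_one, sub_zero, mul_one, zero_mul, zero_add,
          Polynomial.C_eq_natCast]
        try ring
      -- combine into one sum and simplify per k
      have step2 : X * eulerPoly (m+1) = ∑ k ∈ Finset.range (m+1),
          (m.choose k : Polynomial ℝ) *
            ((X-1)^(k+1) * eulerPoly (m-k) + (X-1)^k * eulerPoly (m+1-k)) := by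
        rw [step1, hdR, hRm, Finset.mul_sum, Finset.mul_sum, ← Finset.sum_sub_distrib]
        apply Finset.sum_congr rfl
        intro k hk
        have hkm : k ≤ m := by simpa [Nat.lt_succ_iff] using hk
        rw [Nat.succ_sub hkm, eulerPoly_succ (m-k), Nat.cast_sub hkm]
        linear_combination
          (-(X * (m.choose k : Polynomial ℝ) * eulerPoly (m-k))) * pow_peel k
      -- reindex
      rw [step2]
      rw [Finset.sum_range_succ' (fun k => ((m+1).choose k : Polynomial ℝ) * (X-1)^k *
        eulerPoly (m+1-k)) (m+1)]
      simp only [Nat.succ_sub_succ, Nat.choose_succ_succ, Nat.cast_add, Nat.choose_zero_right,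
        Nat.cast_one, pow_zero, one_mul, Nat.sub_zero, Nat.sub_self]
      simp only [mul_add, add_mul, Finset.sum_add_distrib]
      rw [add_assoc]
      congr 1
      · exact Finset.sum_congr rfl fun x _ => by ring
      · rw [Finset.sum_range_succ' (fun k => ((m.choose k : Polynomial ℝ)) *
          ((X-1)^k * eulerPoly (m+1-k))) m, Finset.sum_range_succ]
        simp only [Nat.succ_sub_succ, Nat.choose_zero_right, Nat.cast_one, pow_zero, one_mul,
          Nat.sub_zero, Nat.choose_succ_self, Nat.cast_zero, zero_mul, add_zero]
        congr 1
        exact Finset.sum_congr rfl fun x _ => by ring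

theorem eulerian_egf (t : ℝ) :
    (PowerSeries.C t - PowerSeries.rescale (t - 1) (PowerSeries.exp ℝ)) *
        PowerSeries.mk (fun n => eulerianValue n t / n.factorial) =
      PowerSeries.C (t - 1) := by
  ext n
  rw [sub_mul, map_sub, PowerSeries.coeff_C_mul, PowerSeries.coeff_mk,
    PowerSeries.coeff_mul, PowerSeries.coeff_C]
  simp only [PowerSeries.coeff_mk, PowerSeries.coeff_rescale, PowerSeries.coeff_exp,
    Finset.Nat.sum_antidiagonal_eq_sum_range_succ_mk, map_div₀, map_one, map_natCast, one_div, map_inv₀]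
  cases n with
  | zero =>
    have h0 : eulerianValue 0 t = 1 := by
      rw [eulerianValue_eq_eval, eulerPoly_zero, eval_one]
    simp [h0]
  | succ m =>
    rw [if_neg (by omega)]
    have hk := key (m+1) (by omega)
    have hkt := congrArg (eval t) hk
    simp only [eval_mul, eval_X, eval_finset_sum, eval_pow, eval_sub, eval_one, eval_natCast,
      ← eulerianValue_eq_eval] at hkt
    rw [sub_eq_zero]
    have hsum : ∑ x ∈ Finset.range (m+1+1),
        (t-1)^x * ((x.factorial : ℝ))⁻¹ * (eulerianValue (m+1-x) t / (m+1-x).factorial)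
        = (∑ x ∈ Finset.range (m+1+1),
            ((m+1).choose x : ℝ) * (t-1)^x * eulerianValue (m+1-x) t) / (m+1).factorial := by
      rw [Finset.sum_div]
      refine Finset.sum_congr rfl fun x hx => ?_
      have hxm : x ≤ m+1 := by simpa [Nat.lt_succ_iff] using hx
      rw [Nat.cast_choose ℝ hxm]
      have f1 : ((x.factorial : ℝ)) ≠ 0 := Nat.cast_ne_zero.mpr (Nat.factorial_ne_zero x)
      have f2 : (((m+1-x).factorial : ℝ)) ≠ 0 := Nat.cast_ne_zero.mpr (Nat.factorial_ne_zero _)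
      have f3 : (((m+1).factorial : ℝ)) ≠ 0 := Nat.cast_ne_zero.mpr (Nat.factorial_ne_zero _)
      field_simp
    rw [hsum, ← hkt]
    ring
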